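/- arXiv:1006.2554 — 2 statements merged into one kernel-verified Lean document; each statement's English description precedes it below -/
import Mathlib

section
/- Symmetry of the Itô transform (Theorem 2, symmetry part): let f : ℝ^d → ℝ be smooth, and let L be a ℂ-linear map from (ℝ^d → ℂ) to (ℝ^d → ℂ) that is symmetric on smooth compactly supported functions, i.e. for all smooth compactly supported u, w : ℝ^d → ℂ one has ∫_{ℝ^d} (L u)(x) · conj(w(x)) dx = ∫_{ℝ^d} u(x) · conj((L w)(x)) dx. Let v, w : ℝ^d × ℝ → ℂ be smooth and compactly supported, and assume the functions (x,y) ↦ (L̂ v)(x,y) · conj(w(x,y)), (x,y) ↦ v(x,y) · conj((L̂ w)(x,y)), and the sheared integrands (x,y) ↦ (L ((A v)(·,y)))(x) · conj((A w)(x,y)) and (x,y) ↦ (A v)(x,y) · conj((L ((A w)(·,y)))(x)) are integrable on ℝ^d × ℝ, where (A v)(x,y) = v(x, y + f(x)). Then ∫_{ℝ^d × ℝ} (L̂ v) · conj(w) d(x,y) = ∫_{ℝ^d × ℝ} v · conj(L̂ w) d(x,y). -/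
open MeasureTheory

/-- The Itô transform of an operator `L` on functions `ℝ^d → ℂ`, relative to `f : ℝ^d → ℝ`:
`(L̂ v)(x, y) = (L (x' ↦ v(x', (y - f x) + f x')))(x)`. -/
noncomputable def itoTransform (d : ℕ) (f : (Fin d → ℝ) → ℝ)
    (L : ((Fin d → ℝ) → ℂ) → ((Fin d → ℝ) → ℂ)) :
    ((Fin d → ℝ) × ℝ → ℂ) → ((Fin d → ℝ) × ℝ → ℂ) :=
  fun v p => L (fun x' => v (x', (p.2 - f p.1) + f x')) p.1

/-- Symmetry of the Itô transform: if `L` is symmetric on smooth compactly supported functions,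
then `L̂` is symmetric on smooth compactly supported functions on `ℝ^d × ℝ`
(under the stated integrability assumptions). -/
theorem itoTransform_symmetric (d : ℕ) (f : (Fin d → ℝ) → ℝ) (hf : ContDiff ℝ (⊤ : ℕ∞) f)
    (L : ((Fin d → ℝ) → ℂ) →ₗ[ℂ] ((Fin d → ℝ) → ℂ))
    (hLsymm : ∀ u w : (Fin d → ℝ) → ℂ,
      ContDiff ℝ (⊤ : ℕ∞) u → HasCompactSupport u → ContDiff ℝ (⊤ : ℕ∞) w → HasCompactSupport w →
      ∫ x, L u x * (starRingEnd ℂ) (w x) = ∫ x, u x * (starRingEnd ℂ) (L w x))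
    (v w : (Fin d → ℝ) × ℝ → ℂ)
    (hv : ContDiff ℝ (⊤ : ℕ∞) v) (hvsupp : HasCompactSupport v)
    (hw : ContDiff ℝ (⊤ : ℕ∞) w) (hwsupp : HasCompactSupport w)
    (hint1 : Integrable (fun p : (Fin d → ℝ) × ℝ =>
      itoTransform d f (⇑L) v p * (starRingEnd ℂ) (w p)))
    (hint2 : Integrable (fun p : (Fin d → ℝ) × ℝ =>
      v p * (starRingEnd ℂ) (itoTransform d f (⇑L) w p)))
    (hint3 : Integrable (fun p : (Fin d → ℝ) × ℝ =>
      L (fun x' => v (x', p.2 + f x')) p.1 * (starRingEnd ℂ) (w (p.1, p.2 + f p.1))))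
    (hint4 : Integrable (fun p : (Fin d → ℝ) × ℝ =>
      v (p.1, p.2 + f p.1) * (starRingEnd ℂ) (L (fun x' => w (x', p.2 + f x')) p.1))) :
    ∫ p : (Fin d → ℝ) × ℝ, itoTransform d f (⇑L) v p * (starRingEnd ℂ) (w p) =
      ∫ p : (Fin d → ℝ) × ℝ, v p * (starRingEnd ℂ) (itoTransform d f (⇑L) w p) := by
  have hmeas : (volume : Measure ((Fin d → ℝ) × ℝ))
      = (volume : Measure (Fin d → ℝ)).prod volume := Measure.volume_eq_prod _ _
  -- slice properties
  have hsliceC : ∀ (u : (Fin d → ℝ) × ℝ → ℂ), ContDiff ℝ (⊤ : ℕ∞) u →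
      ∀ y : ℝ, ContDiff ℝ (⊤ : ℕ∞) (fun x => u (x, y + f x)) := by
    intro u hu y
    exact hu.comp (contDiff_id.prodMk (contDiff_const.add hf))
  have hsliceS : ∀ (u : (Fin d → ℝ) × ℝ → ℂ), HasCompactSupport u →
      ∀ y : ℝ, HasCompactSupport (fun x => u (x, y + f x)) := by
    intro u husupp y
    apply HasCompactSupport.intro (husupp.image continuous_fst)
    intro x hx
    by_contra h
    exact hx ⟨(x, y + f x), subset_tsupport _ h, rfl⟩
  rw [hmeas] at hint1 hint2 hint3 hint4 ⊢
  have h1 : ∫ p, itoTransform d f (⇑L) v p * (starRingEnd ℂ) (w p)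
        ∂((volume : Measure (Fin d → ℝ)).prod volume)
      = ∫ p, L (fun x' => v (x', p.2 + f x')) p.1 *
          (starRingEnd ℂ) (w (p.1, p.2 + f p.1))
        ∂((volume : Measure (Fin d → ℝ)).prod volume) := by
    rw [MeasureTheory.integral_prod _ hint1, MeasureTheory.integral_prod _ hint3]
    refine integral_congr_ae (Filter.Eventually.of_forall fun x => ?_)
    dsimp only
    rw [← MeasureTheory.integral_add_right_eq_self (μ := (volume : Measure ℝ))
      (fun y => itoTransform d f (⇑L) v (x, y) * (starRingEnd ℂ) (w (x, y))) (f x)]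
    refine integral_congr_ae (Filter.Eventually.of_forall fun y => ?_)
    simp [itoTransform, add_sub_cancel_right]
  have h2 : ∫ p, v p * (starRingEnd ℂ) (itoTransform d f (⇑L) w p)
        ∂((volume : Measure (Fin d → ℝ)).prod volume)
      = ∫ p, v (p.1, p.2 + f p.1) *
          (starRingEnd ℂ) (L (fun x' => w (x', p.2 + f x')) p.1)
        ∂((volume : Measure (Fin d → ℝ)).prod volume) := by
    rw [MeasureTheory.integral_prod _ hint2, MeasureTheory.integral_prod _ hint4]
    refine integral_congr_ae (Filter.Eventually.of_forall fun x => ?_)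
    dsimp only
    rw [← MeasureTheory.integral_add_right_eq_self (μ := (volume : Measure ℝ))
      (fun y => v (x, y) * (starRingEnd ℂ) (itoTransform d f (⇑L) w (x, y))) (f x)]
    refine integral_congr_ae (Filter.Eventually.of_forall fun y => ?_)
    simp [itoTransform, add_sub_cancel_right]
  rw [h1, h2, MeasureTheory.integral_prod_symm _ hint3,
    MeasureTheory.integral_prod_symm _ hint4]
  refine integral_congr_ae (Filter.Eventually.of_forall fun y => ?_)
  exact hLsymm _ _ (hsliceC v hv y) (hsliceS v hvsupp y) (hsliceC w hw y) (hsliceS w hwsupp y)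
end

section
/- Positivity of the Itô transform (Theorem 2, positivity part): let f : ℝ^d → ℝ be smooth, and let L be a ℂ-linear map from (ℝ^d → ℂ) to (ℝ^d → ℂ) that is positive on smooth compactly supported functions, i.e. for all smooth compactly supported u : ℝ^d → ℂ the integral ∫_{ℝ^d} (L u)(x) · conj(u(x)) dx is real and nonnegative. Let v : ℝ^d × ℝ → ℂ be smooth and compactly supported, and assume the function (x,y) ↦ (L̂ v)(x,y) · conj(v(x,y)) and its sheared version (x,y) ↦ (L ((A v)(·,y)))(x) · conj((A v)(x,y)) are integrable on ℝ^d × ℝ, where (A v)(x,y) = v(x, y + f(x)). Then ∫_{ℝ^d × ℝ} (L̂ v)(x,y) · conj(v(x,y)) d(x,y) is real and nonnegative. -/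
open MeasureTheory ComplexOrder

/-- A complex-valued integrable function that is pointwise nonneg (in `ComplexOrder`)
has nonneg integral. -/
lemma integral_nonneg_cplx {α : Type*} [MeasurableSpace α] {μ : Measure α} {g : α → ℂ}
    (hg : Integrable g μ) (h : ∀ x, 0 ≤ g x) : 0 ≤ ∫ x, g x ∂μ := by
  have h' : ∀ x, 0 ≤ (g x).re ∧ 0 = (g x).im := by
    intro x
    have := h x
    rw [Complex.le_def] at this
    simpa using this
  rw [Complex.le_def]
  constructor
  · have : (∫ x, g x ∂μ).re = ∫ x, (g x).re ∂μ := by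
      have := integral_re (𝕜 := ℂ) hg
      simpa using this.symm
    rw [Complex.zero_re, this]
    exact integral_nonneg fun x => (h' x).1
  · have : (∫ x, g x ∂μ).im = ∫ x, (g x).im ∂μ := by
      have := integral_im (𝕜 := ℂ) hg
      simpa using this.symm
    rw [Complex.zero_im, this]
    have hz : ∀ x, (g x).im = 0 := fun x => (h' x).2.symm
    simp [hz]

/-- Positivity of the Itô transform: if `L` is positive on smooth compactly supported
functions on `ℝ^d`, then `L̂` is positive on smooth compactly supported functions on
`ℝ^d × ℝ` (under the stated integrability assumptions). Here `0 ≤ z` for `z : ℂ` means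
that `z` is real and nonnegative. -/
theorem itoTransform_positive (d : ℕ) (f : (Fin d → ℝ) → ℝ) (hf : ContDiff ℝ (⊤ : ℕ∞) f)
    (L : ((Fin d → ℝ) → ℂ) →ₗ[ℂ] ((Fin d → ℝ) → ℂ))
    (hLpos : ∀ u : (Fin d → ℝ) → ℂ, ContDiff ℝ (⊤ : ℕ∞) u → HasCompactSupport u →
      0 ≤ ∫ x, L u x * (starRingEnd ℂ) (u x))
    (v : (Fin d → ℝ) × ℝ → ℂ)
    (hv : ContDiff ℝ (⊤ : ℕ∞) v) (hvsupp : HasCompactSupport v)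
    (hint1 : Integrable (fun p : (Fin d → ℝ) × ℝ =>
      itoTransform d f (⇑L) v p * (starRingEnd ℂ) (v p)))
    (hint2 : Integrable (fun p : (Fin d → ℝ) × ℝ =>
      L (fun x' => v (x', p.2 + f x')) p.1 * (starRingEnd ℂ) (v (p.1, p.2 + f p.1)))) :
    0 ≤ ∫ p : (Fin d → ℝ) × ℝ, itoTransform d f (⇑L) v p * (starRingEnd ℂ) (v p) := by
  have hfc : Continuous f := hf.continuous
  -- the shear map, measure preserving
  set S : (Fin d → ℝ) × ℝ → (Fin d → ℝ) × ℝ := fun p => (p.1, p.2 + f p.1) with hSdef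
  have hSmeas : MeasurePreserving S
      ((volume : Measure (Fin d → ℝ)).prod volume)
      ((volume : Measure (Fin d → ℝ)).prod volume) :=
    (MeasurePreserving.id _).skew_product (g := fun x y => y + f x)
      (by exact measurable_snd.add (hfc.measurable.comp measurable_fst))
      (Filter.Eventually.of_forall fun x => map_add_right_eq_self volume (f x))
  have hScont : Continuous S := continuous_fst.prodMk (continuous_snd.add (hfc.comp continuous_fst))
  have hSinj : Function.Injective S := by
    intro p q h
    simp only [hSdef, Prod.mk.injEq] at h
    obtain ⟨h1, h2⟩ := h
    rw [h1] at h2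
    exact Prod.ext h1 (by linarith)
  have hSemb : MeasurableEmbedding S := hScont.measurableEmbedding hSinj
  have hvol : (volume : Measure ((Fin d → ℝ) × ℝ)) =
      (volume : Measure (Fin d → ℝ)).prod volume := rfl
  -- change of variables: the integral equals the sheared one
  have key : (∫ p : (Fin d → ℝ) × ℝ, itoTransform d f (⇑L) v p * (starRingEnd ℂ) (v p))
      = ∫ p : (Fin d → ℝ) × ℝ,
          L (fun x' => v (x', p.2 + f x')) p.1 * (starRingEnd ℂ) (v (p.1, p.2 + f p.1)) := by
    rw [hvol, ← hSmeas.integral_comp hSemb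
      (fun p => itoTransform d f (⇑L) v p * (starRingEnd ℂ) (v p))]
    refine integral_congr_ae (Filter.Eventually.of_forall fun p => ?_)
    simp only [hSdef, itoTransform]
    have harg : (fun x' => v (x', (p.2 + f p.1) - f p.1 + f x'))
        = fun x' => v (x', p.2 + f x') := by
      funext x'
      have : (p.2 + f p.1) - f p.1 + f x' = p.2 + f x' := by ring
      rw [this]
    rw [harg]
  rw [key]
  -- the sheared integrand, as a function of two variables
  set G : (Fin d → ℝ) → ℝ → ℂ := fun x y =>
    L (fun x' => v (x', y + f x')) x * (starRingEnd ℂ) (v (x, y + f x)) with hGdef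
  have hint2' : Integrable (Function.uncurry G)
      ((volume : Measure (Fin d → ℝ)).prod volume) := by
    rw [← hvol]; exact hint2
  have slices : ∀ y : ℝ, 0 ≤ ∫ x, G x y := by
    intro y
    set u : (Fin d → ℝ) → ℂ := fun x' => v (x', y + f x') with hudef
    have hu : ContDiff ℝ (⊤ : ℕ∞) u :=
      hv.comp (contDiff_id.prodMk (contDiff_const.add hf))
    have huc : HasCompactSupport u := by
      apply HasCompactSupport.intro (hvsupp.image continuous_fst)
      intro x hx
      by_contra h
      exact hx ⟨(x, y + f x), subset_tsupport v h, rfl⟩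
    exact hLpos u hu huc
  -- Fubini and slicewise positivity
  calc (0 : ℂ) ≤ ∫ y, ∫ x, G x y := by
        refine integral_nonneg_cplx ?_ slices
        exact hint2'.integral_prod_right
    _ = ∫ x, ∫ y, G x y := (integral_integral_swap ?_).symm
    _ = ∫ p : (Fin d → ℝ) × ℝ, G p.1 p.2 := (integral_prod _ hint2').symm
  · exact hint2'
end
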